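/- Let H₀ and H₁ be Hilbert spaces with orthonormal bases (δₙ)ₙ and (γₙ)ₙ respectively, and let A, B be operators on H = H₀ ⊕ H₁ defined by (A⊕B)(δ_{2n}) = (δ_{2n+1}, 0), (A⊕B)(δ_{2n+1}) = (δ_{2n}, δ_{2n+1})/√2, and (A⊕B)(γₙ) = (cₙγ_{n+1}, √(1−cₙ²)δ_{2n}) for a sequence cₙ ∈ (0,1). Then the map ξ ↦ (Aξ, Bξ) from H to H ⊕ H is an isometry. -/
import Mathlib

open scoped ENNReal ComplexInnerProductSpace

noncomputable section

abbrev H' := lp (fun _ : ℕ ⊕ ℕ => ℂ) 2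

lemma inner_ee (i j : ℕ ⊕ ℕ) :
    ⟪(lp.single 2 i (1:ℂ) : H'), lp.single 2 j (1:ℂ)⟫ = if i = j then 1 else 0 := by
  rw [lp.inner_single_left]
  rcases eq_or_ne i j with rfl | h
  · simp [lp.single_apply_self, RCLike.inner_apply]
  · simp [lp.single_apply_ne 2 j _ h, RCLike.inner_apply, h]

lemma dense_span_single :
    Dense (↑(Submodule.span ℂ (Set.range fun i : ℕ ⊕ ℕ => (lp.single 2 i (1:ℂ) : H'))) : Set H') := by
  intro f
  have hs := lp.hasSum_single (E := fun _ : ℕ ⊕ ℕ => ℂ) (by norm_num : (2:ℝ≥0∞) ≠ ⊤) f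
  refine mem_closure_of_tendsto hs (Filter.Eventually.of_forall fun s => ?_)
  refine Submodule.sum_mem _ fun i _ => ?_
  have h1 : (lp.single 2 i (f i) : H') = (f i) • lp.single 2 i (1:ℂ) := by
    rw [← lp.single_smul]; norm_num
  rw [h1]
  exact Submodule.smul_mem _ _ (Submodule.subset_span ⟨i, rfl⟩)

end

set_option maxHeartbeats 1000000 in
theorem pythagorean_isometry
    (c : ℕ → ℝ) (hc : ∀ n, c n ∈ Set.Ioo (0:ℝ) 1)
    (A B : lp (fun _ : ℕ ⊕ ℕ => ℂ) 2 →L[ℂ] lp (fun _ : ℕ ⊕ ℕ => ℂ) 2)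
    (δ γ : ℕ → lp (fun _ : ℕ ⊕ ℕ => ℂ) 2)
    (hδ : ∀ n, δ n = lp.single 2 (Sum.inl n) (1:ℂ))
    (hγ : ∀ n, γ n = lp.single 2 (Sum.inr n) (1:ℂ))
    (hA1 : ∀ n, A (δ (2*n)) = δ (2*n+1))
    (hB1 : ∀ n, B (δ (2*n)) = 0)
    (hA2 : ∀ n, A (δ (2*n+1)) = ((Real.sqrt 2 : ℂ))⁻¹ • δ (2*n))
    (hB2 : ∀ n, B (δ (2*n+1)) = ((Real.sqrt 2 : ℂ))⁻¹ • δ (2*n+1))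
    (hA3 : ∀ n, A (γ n) = (c n : ℂ) • γ (n+1))
    (hB3 : ∀ n, B (γ n) = ((Real.sqrt (1 - (c n)^2) : ℂ)) • δ (2*n)) :
    ∀ ξ, ‖A ξ‖^2 + ‖B ξ‖^2 = ‖ξ‖^2 := by
  simp only [hδ, hγ] at hA1 hB1 hA2 hB2 hA3 hB3
  set e : ℕ ⊕ ℕ → H' := fun i => lp.single 2 i (1:ℂ) with he
  -- key computation on basis vectors
  have key : ∀ i j, ⟪A (e i), A (e j)⟫ + ⟪B (e i), B (e j)⟫ = ⟪e i, e j⟫ := by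
    have sqrt2_ne : (Real.sqrt 2 : ℂ) ≠ 0 := by
      norm_cast; positivity
    intro i j
    obtain (n | n) := i <;> obtain (m | m) := j
    · -- inl inl
      obtain ⟨k, rfl | rfl⟩ := Nat.even_or_odd' n <;> obtain ⟨l, rfl | rfl⟩ := Nat.even_or_odd' m
      · rw [hA1 k, hA1 l, hB1 k, hB1 l]
        by_cases h : k = l <;>
          simp [inner_ee, h, Sum.inl.injEq, he]
      · rw [hA1 k, hA2 l, hB1 k, hB2 l]
        have h1 : Sum.inl (2*k+1) ≠ (Sum.inl (2*l) : ℕ ⊕ ℕ) := by simp; omega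
        have h2 : Sum.inl (2*k) ≠ (Sum.inl (2*l+1) : ℕ ⊕ ℕ) := by simp; omega
        simp [inner_ee, inner_smul_right, he, h1, h2]
      · rw [hA2 k, hA1 l, hB2 k, hB1 l]
        have h1 : Sum.inl (2*k) ≠ (Sum.inl (2*l+1) : ℕ ⊕ ℕ) := by simp; omega
        have h2 : Sum.inl (2*k+1) ≠ (Sum.inl (2*l) : ℕ ⊕ ℕ) := by simp; omega
        simp [inner_ee, inner_smul_left, he, h1, h2]
      · rw [hA2 k, hA2 l, hB2 k, hB2 l]
        by_cases h : k = l
        · subst h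
          simp only [inner_smul_left, inner_smul_right, inner_ee, if_pos rfl, he, mul_one]
          have : (starRingEnd ℂ) ((Real.sqrt 2 : ℂ))⁻¹ = ((Real.sqrt 2 : ℂ))⁻¹ := by
            rw [map_inv₀, Complex.conj_ofReal]
          rw [this]
          have h2 : (Real.sqrt 2 : ℂ) * (Real.sqrt 2 : ℂ) = 2 := by
            rw [← Complex.ofReal_mul, Real.mul_self_sqrt (by norm_num : (0:ℝ) ≤ 2)]
            norm_num
          have h3 : ((Real.sqrt 2 : ℂ))⁻¹ * ((Real.sqrt 2 : ℂ))⁻¹ = 2⁻¹ := by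
            rw [← mul_inv, h2]
          simp only [if_true, mul_one]
          rw [h3]
          norm_num
        · have h1 : Sum.inl (2*k) ≠ (Sum.inl (2*l) : ℕ ⊕ ℕ) := by simp; omega
          have h2 : Sum.inl (2*k+1) ≠ (Sum.inl (2*l+1) : ℕ ⊕ ℕ) := by simp; omega
          simp [inner_smul_left, inner_smul_right, inner_ee, he, h1, h2]
    · -- inl inr
      obtain ⟨k, rfl | rfl⟩ := Nat.even_or_odd' n
      · rw [hA1 k, hA3 m, hB1 k, hB3 m]
        simp [inner_ee, inner_smul_right, he]
      · rw [hA2 k, hA3 m, hB2 k, hB3 m]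
        have h1 : Sum.inl (2*k+1) ≠ (Sum.inl (2*m) : ℕ ⊕ ℕ) := by simp; omega
        simp [inner_ee, inner_smul_left, inner_smul_right, he, h1]
    · -- inr inl
      obtain ⟨l, rfl | rfl⟩ := Nat.even_or_odd' m
      · rw [hA3 n, hA1 l, hB3 n, hB1 l]
        simp [inner_ee, inner_smul_left, he]
      · rw [hA3 n, hA2 l, hB3 n, hB2 l]
        have h1 : Sum.inl (2*n) ≠ (Sum.inl (2*l+1) : ℕ ⊕ ℕ) := by simp; omega
        simp [inner_ee, inner_smul_left, inner_smul_right, he, h1]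
    · -- inr inr
      rw [hA3 n, hA3 m, hB3 n, hB3 m]
      by_cases h : n = m
      · subst h
        have h1 : (0:ℝ) ≤ 1 - c n ^ 2 := by
          have := (hc n).1; have := (hc n).2; nlinarith
        have h2 : ((Real.sqrt (1 - c n ^2) : ℂ)) * ((Real.sqrt (1 - c n ^2) : ℂ))
            = ((1 - c n ^2 : ℝ) : ℂ) := by
          rw [← Complex.ofReal_mul, Real.mul_self_sqrt h1]
        simp only [he]
        rw [inner_smul_left, inner_smul_right, inner_smul_left, inner_smul_right,
          inner_ee, inner_ee, inner_ee]
        simp only [if_pos rfl, if_true, mul_one, Complex.conj_ofReal]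
        rw [h2]
        push_cast
        ring
      · have h1 : Sum.inr (n+1) ≠ (Sum.inr (m+1) : ℕ ⊕ ℕ) := by simp; omega
        have h2 : Sum.inl (2*n) ≠ (Sum.inl (2*m) : ℕ ⊕ ℕ) := by simp; omega
        have h3 : Sum.inr n ≠ (Sum.inr m : ℕ ⊕ ℕ) := by simp [h]
        simp [inner_smul_left, inner_smul_right, inner_ee, he, h1, h2, h3]
  -- extend to e i against arbitrary vector
  have step1 : ∀ i (y : H'), ⟪A (e i), A y⟫ + ⟪B (e i), B y⟫ = ⟪e i, y⟫ := by
    intro i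
    have hf : Continuous fun y : H' => ⟪A (e i), A y⟫ + ⟪B (e i), B y⟫ :=
      (continuous_const.inner A.continuous).add (continuous_const.inner B.continuous)
    have hg : Continuous fun y : H' => ⟪e i, y⟫ := continuous_const.inner continuous_id
    have heq := Continuous.ext_on dense_span_single hf hg ?_
    · exact fun y => congrFun heq y
    · intro y hy
      induction hy using Submodule.span_induction with
      | mem x hx => obtain ⟨j, rfl⟩ := hx; exact key i j
      | zero => simp
      | add x y _ _ hx hy => simp only [map_add, inner_add_right]; linear_combination hx + hy
      | smul a x _ hx => simp only [map_smul, inner_smul_right]; linear_combination a * hx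
  -- extend fully
  have step2 : ∀ (x y : H'), ⟪A x, A y⟫ + ⟪B x, B y⟫ = ⟪x, y⟫ := by
    intro x y
    have hf : Continuous fun x : H' => ⟪A x, A y⟫ + ⟪B x, B y⟫ :=
      ((A.continuous.inner continuous_const).add (B.continuous.inner continuous_const))
    have hg : Continuous fun x : H' => ⟪x, y⟫ := continuous_id.inner continuous_const
    have heq := Continuous.ext_on dense_span_single hf hg ?_
    · exact congrFun heq x
    · intro x hx
      induction hx using Submodule.span_induction with
      | mem x hx => obtain ⟨i, rfl⟩ := hx; exact step1 i y
      | zero => simp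
      | add x z _ _ hx hz => simp only [map_add, inner_add_left]; linear_combination hx + hz
      | smul a x _ hx => simp only [map_smul, inner_smul_left]
                         linear_combination (starRingEnd ℂ) a * hx
  intro ξ
  have h := step2 ξ ξ
  rw [inner_self_eq_norm_sq_to_K, inner_self_eq_norm_sq_to_K, inner_self_eq_norm_sq_to_K] at h
  exact_mod_cast h
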